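/- arXiv:1703.04715 — 2 statements merged into one kernel-verified Lean document; each statement's English description precedes it below -/
import Mathlib

section
/- Fix k ≥ 2. Let r_j(m,n) count overpartitions of n with m overlined parts, all parts ≤ j, satisfying the D_k conditions (an overlined b̄ forbids non-overlined b,...,b+k−2 and overlined (b+1)̄,...,(b+k−1)̄), and with no overlined part exceeding j−k+1. Let R_j(a,q) = ∑_{m,n} r_j(m,n) a^m q^n, with R_0 = 1. Then for all j ≥ k, R_j(a,q) = R_{j−1}(a,q)/(1−q^j) + a q^{j−k+1} R_{j−k}(a,q)/(1−q^j), and R_j(a,q) = 1/(q;q)_j for 0 ≤ j < k. -/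
/-- An overpartition of `n`: a partition (the multiset `parts` of non-overlined parts)
together with a set `over` of overlined parts (each part value may be overlined at
most once, so `over` is a finset), all parts positive, with total sum `n`. -/
structure Overpartition (n : ℕ) where
  overlined : Finset ℕ
  parts : Multiset ℕ
  over_pos : ∀ b ∈ overlined, 0 < b
  parts_pos : ∀ b ∈ parts, 0 < b
  total : overlined.sum id + parts.sum = n

/-- The conditions of the main overpartition theorem: an overlined part `b̄` forbids
the non-overlined parts `b, b+1, …, b+k−2` and the overlined parts
`b+1, b+2, …, b+k−1`. -/
def DCond (k : ℕ) {n : ℕ} (p : Overpartition n) : Prop :=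
  (∀ b ∈ p.overlined, ∀ c ∈ p.parts, ¬ (b ≤ c ∧ c + 2 ≤ b + k)) ∧
  (∀ b ∈ p.overlined, ∀ c ∈ p.overlined, ¬ (b + 1 ≤ c ∧ c + 1 ≤ b + k))

/-- `DCount k m n` is the number `D_k(m,n)` of overpartitions of `n` with exactly `m`
overlined parts satisfying the conditions `DCond k`. -/
noncomputable def DCount (k m n : ℕ) : ℕ :=
  Nat.card {p : Overpartition n // DCond k p ∧ p.overlined.card = m}

/-- `r_j(m,n)`: overpartitions of `n` with `m` overlined parts, all parts `≤ j`,
satisfying the `D_k` conditions, and with every overlined part `≤ j − k + 1`. -/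
noncomputable def RCount (k j m n : ℕ) : ℕ :=
  Nat.card {p : Overpartition n // DCond k p ∧ (∀ c ∈ p.parts, c ≤ j) ∧
    (∀ b ∈ p.overlined, b ≤ j ∧ b + k ≤ j + 1) ∧ p.overlined.card = m}

/-- `R_j(a,q) = ∑_{m,n} r_j(m,n) aᵐ qⁿ` as a power series in `q` with coefficients
in `ℤ[a]` (note `m ≤ n` whenever `r_j(m,n) ≠ 0`). -/
noncomputable def Rgf (k j : ℕ) : PowerSeries (Polynomial ℤ) :=
  PowerSeries.mk fun n => ∑ m ∈ Finset.range (n + 1),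
    Polynomial.C (RCount k j m n : ℤ) * Polynomial.X ^ m

/-!
Split the overpartitions counted by `r_j(m, n)` according to whether they contain the
non-overlined part `j`, else the overlined part `j - k + 1`, or neither. Removing one part `j`
is a bijection onto the overpartitions counted by `r_j(m, n - j)`. Removing `j - k + 1` is a
bijection onto those counted by `r_{j-k}(m - 1, n - (j - k + 1))`: the `D_k` conditions at
`j - k + 1` push the other non-overlined parts down to `≤ j - k` and the other overlined parts
down to `≤ j - 2k + 1`. The remaining overpartitions are exactly those counted by `r_{j-1}(m, n)`.
For `j < k` no overlined part is allowed, so the middle case is empty, and `R_0 = 1`.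
-/

theorem Nat.card_subtype_eq_card_and_add_card_and_not {α : Type*} [Finite α] (p q : α → Prop) :
    Nat.card {x // p x} = Nat.card {x // q x ∧ p x} + Nat.card {x // ¬q x ∧ p x} := by
  classical
  rw [← Nat.card_congr (Equiv.sumCompl fun x : {x // p x} => q x), Nat.card_sum,
    Nat.card_congr (Equiv.subtypeSubtypeEquivSubtypeInter p q),
    Nat.card_congr (Equiv.subtypeSubtypeEquivSubtypeInter p fun x => ¬q x)]
  simp only [and_comm]

namespace Overpartition

variable {n : ℕ}

theorem ext {p q : Overpartition n} (ho : p.overlined = q.overlined) (hp : p.parts = q.parts) :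
    p = q := by
  cases p; cases q; simp_all

theorem le_of_mem_overlined (p : Overpartition n) {b : ℕ} (hb : b ∈ p.overlined) : b ≤ n :=
  (Finset.single_le_sum (f := id) (fun _ _ => Nat.zero_le _) hb).trans
    ((Nat.le_add_right _ _).trans_eq p.total)

theorem le_of_mem_parts (p : Overpartition n) {c : ℕ} (hc : c ∈ p.parts) : c ≤ n :=
  (Multiset.le_sum_of_mem hc).trans ((Nat.le_add_left _ _).trans_eq p.total)

theorem card_overlined_le (p : Overpartition n) : p.overlined.card ≤ n := by
  simpa using (Finset.card_nsmul_le_sum p.overlined id 1 p.over_pos).trans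
    ((Nat.le_add_right _ _).trans_eq p.total)

theorem card_parts_le (p : Overpartition n) : Multiset.card p.parts ≤ n := by
  simpa using (Multiset.card_nsmul_le_sum p.parts_pos).trans
    ((Nat.le_add_left _ _).trans_eq p.total)

theorem overlined_subset_range (p : Overpartition n) : p.overlined ⊆ Finset.range (n + 1) :=
  fun _ hb => Finset.mem_range_succ_iff.2 (p.le_of_mem_overlined hb)

theorem parts_le_nsmul_range (p : Overpartition n) :
    p.parts ≤ n • (Finset.range (n + 1)).val := by
  refine Multiset.le_iff_count.2 fun c => ?_
  by_cases hc : c ∈ p.parts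
  · rw [Multiset.count_nsmul, Multiset.count_eq_one_of_mem (Finset.nodup _)
      (Finset.mem_range_succ_iff.2 (p.le_of_mem_parts hc)), mul_one]
    exact (Multiset.count_le_card c p.parts).trans p.card_parts_le
  · simp [Multiset.count_eq_zero_of_notMem hc]

instance : Finite (Overpartition n) :=
  Finite.of_injective
    (fun p : Overpartition n =>
      ((⟨p.overlined, p.overlined_subset_range⟩ : Set.Iic (Finset.range (n + 1))),
        (⟨p.parts, p.parts_le_nsmul_range⟩ : Set.Iic (n • (Finset.range (n + 1)).val))))
    fun _ _ h => ext (congrArg (·.1.1) h) (congrArg (·.2.1) h)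

theorem eq_empty (p : Overpartition 0) : p.overlined = ∅ ∧ p.parts = 0 := by
  have h := p.total
  rw [Nat.add_eq_zero_iff, Finset.sum_eq_zero_iff, Multiset.sum_eq_zero_iff] at h
  exact ⟨Finset.eq_empty_of_forall_notMem fun b hb => (p.over_pos b hb).ne' (h.1 b hb),
    Multiset.eq_zero_of_forall_notMem fun c hc => (p.parts_pos c hc).ne' (h.2 c hc)⟩

instance : Unique (Overpartition 0) where
  default := ⟨∅, 0, by simp, by simp, rfl⟩
  uniq p := ext p.eq_empty.1 p.eq_empty.2

def removePartEquiv {c : ℕ} (hc : 0 < c) :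
    {p : Overpartition (n + c) // c ∈ p.parts} ≃ Overpartition n where
  toFun p := ⟨p.1.overlined, p.1.parts.erase c, p.1.over_pos,
    fun _ h => p.1.parts_pos _ (Multiset.mem_of_mem_erase h), by
      have h := p.1.total
      rw [← Multiset.cons_erase p.2, Multiset.sum_cons] at h
      omega⟩
  invFun q := ⟨⟨q.overlined, c ::ₘ q.parts, q.over_pos,
    Multiset.forall_mem_cons.2 ⟨hc, q.parts_pos⟩, by
      have := q.total
      rw [Multiset.sum_cons]
      omega⟩, Multiset.mem_cons_self _ _⟩
  left_inv p := Subtype.ext (ext rfl (Multiset.cons_erase p.2))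
  right_inv q := ext rfl (Multiset.erase_cons_head _ _)

def removeOverlinedEquiv {b : ℕ} (hb : 0 < b) :
    {p : Overpartition (n + b) // b ∈ p.overlined} ≃ {q : Overpartition n // b ∉ q.overlined} where
  toFun p := ⟨⟨p.1.overlined.erase b, p.1.parts,
    fun _ h => p.1.over_pos _ (Finset.mem_of_mem_erase h), p.1.parts_pos, by
      have h := p.1.total
      rw [← Finset.insert_erase p.2, Finset.sum_insert (Finset.notMem_erase _ _)] at h
      simp only [id] at h ⊢
      omega⟩, Finset.notMem_erase _ _⟩
  invFun q := ⟨⟨insert b q.1.overlined, q.1.parts,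
    Finset.forall_mem_insert _ _ _ |>.2 ⟨hb, q.1.over_pos⟩, q.1.parts_pos, by
      have h := q.1.total
      rw [Finset.sum_insert q.2]
      simp only [id] at h ⊢
      omega⟩, Finset.mem_insert_self _ _⟩
  left_inv p := Subtype.ext (ext (Finset.insert_erase p.2) rfl)
  right_inv q := Subtype.ext (ext (Finset.erase_insert q.2) rfl)

end Overpartition

open PowerSeries

def RCond (k j m : ℕ) {n : ℕ} (p : Overpartition n) : Prop :=
  DCond k p ∧ (∀ c ∈ p.parts, c ≤ j) ∧ (∀ b ∈ p.overlined, b ≤ j ∧ b + k ≤ j + 1) ∧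
    p.overlined.card = m

section RCond

variable {k j m n : ℕ}

theorem rCount_eq_card : RCount k j m n = Nat.card {p : Overpartition n // RCond k j m p} := rfl

theorem rCount_eq_zero_of_lt (h : n < m) : RCount k j m n = 0 :=
  Nat.card_eq_zero.2 <| .inl ⟨fun ⟨p, _, _, _, hm⟩ => by have := p.card_overlined_le; omega⟩

theorem rCond_zero_iff (p : Overpartition n) : RCond k 0 m p ↔ n = 0 ∧ m = 0 := by
  constructor
  · rintro ⟨-, hparts, hover, rfl⟩
    have ho : p.overlined = ∅ := Finset.eq_empty_of_forall_notMem fun b hb =>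
      (p.over_pos b hb).ne' (Nat.le_zero.1 (hover b hb).1)
    have hp : p.parts = 0 := Multiset.eq_zero_of_forall_notMem fun c hc =>
      (p.parts_pos c hc).ne' (Nat.le_zero.1 (hparts c hc))
    have := p.total
    simp_all
  · rintro ⟨rfl, rfl⟩
    simp [RCond, DCond, p.eq_empty]

theorem rCount_zero : RCount k 0 m n = if n = 0 ∧ m = 0 then 1 else 0 := by
  rw [rCount_eq_card, Nat.card_congr (Equiv.subtypeEquivRight rCond_zero_iff)]
  split_ifs with h
  · obtain ⟨rfl, rfl⟩ := h
    simp
  · simp [h]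

theorem rCond_iff_of_parts_eq_cons {n' : ℕ} {p : Overpartition n} {q : Overpartition n'}
    (ho : p.overlined = q.overlined) (hp : p.parts = j ::ₘ q.parts) :
    RCond k j m p ↔ RCond k j m q := by
  simp only [RCond, DCond, ho, hp, Multiset.forall_mem_cons]
  constructor
  · rintro ⟨⟨hD₁, hD₂⟩, hc, ho, hm⟩
    exact ⟨⟨fun b hb => (hD₁ b hb).2, hD₂⟩, hc.2, ho, hm⟩
  · rintro ⟨⟨hD₁, hD₂⟩, hc, ho, hm⟩
    exact ⟨⟨fun b hb => ⟨by have := (ho b hb).2; omega, hD₁ b hb⟩, hD₂⟩, ⟨le_rfl, hc⟩, ho, hm⟩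

theorem rCond_iff_of_overlined_eq_insert (hk : 0 < k) (hkj : k ≤ j) {n' : ℕ}
    {p : Overpartition n} {q : Overpartition n'} (hb : j - k + 1 ∉ q.overlined)
    (ho : p.overlined = insert (j - k + 1) q.overlined) (hp : p.parts = q.parts) :
    j ∉ p.parts ∧ RCond k j (m + 1) p ↔ RCond k (j - k) m q := by
  simp only [RCond, DCond, ho, hp, Finset.forall_mem_insert, Finset.card_insert_of_notMem hb]
  constructor
  · rintro ⟨hj, ⟨⟨hbc, hD₁⟩, ⟨-, hbo⟩, hob⟩, hc, ⟨-, ho⟩, hm⟩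
    refine ⟨⟨hD₁, fun b hb => (hob b hb).2⟩, fun c hc' => ?_, fun b hb' => ?_, by omega⟩
    · have := hc c hc'
      have := hbc c hc'
      have : c ≠ j := fun h => hj (h ▸ hc')
      omega
    · have := (hob b hb').1
      have := ho b hb'
      have : b ≠ j - k + 1 := fun h => hb (h ▸ hb')
      omega
  · rintro ⟨⟨hD₁, hD₂⟩, hc, ho, rfl⟩
    refine ⟨fun hj => absurd (hc j hj) (by omega), ⟨⟨fun c hc' => ?_, hD₁⟩, ⟨by omega,
      fun b hb' => ?_⟩, fun b hb' => ⟨?_, hD₂ b hb'⟩⟩, fun c hc' => (hc c hc').trans (by omega),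
      ⟨by omega, fun b hb' => ?_⟩, rfl⟩
    · have := hc c hc'; omega
    · have := ho b hb'; omega
    · have := ho b hb'; omega
    · have := ho b hb'; omega

theorem rCond_iff_of_notMem (hk : 0 < k) (p : Overpartition n) :
    j - k + 1 ∉ p.overlined ∧ j ∉ p.parts ∧ RCond k j m p ↔ RCond k (j - 1) m p := by
  unfold RCond
  constructor
  · rintro ⟨hb, hj, hD, hc, ho, hm⟩
    refine ⟨hD, fun c hc' => ?_, fun b hb' => ?_, hm⟩
    · have := hc c hc'
      have : c ≠ j := fun h => hj (h ▸ hc')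
      omega
    · have := ho b hb'
      have := p.over_pos b hb'
      have : b ≠ j - k + 1 := fun h => hb (h ▸ hb')
      omega
  · rintro ⟨hD, hc, ho, hm⟩
    refine ⟨fun hb => ?_, fun hj => ?_, hD, fun c hc' => ?_, fun b hb' => ?_, hm⟩
    · have := ho _ hb; have := p.over_pos _ hb; omega
    · have := hc j hj; have := p.parts_pos j hj; omega
    · have := hc c hc'; omega
    · have := ho b hb'; omega

theorem card_mem_parts_rCond (hj : 0 < j) :
    Nat.card {p : Overpartition n // j ∈ p.parts ∧ RCond k j m p} =
      if j ≤ n then RCount k j m (n - j) else 0 := by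
  split_ifs with hjn
  · obtain ⟨n, rfl⟩ := Nat.exists_eq_add_of_le' hjn
    rw [Nat.add_sub_cancel, rCount_eq_card]
    exact Nat.card_congr <|
      (Equiv.subtypeSubtypeEquivSubtypeInter _ _).symm.trans <|
        (Overpartition.removePartEquiv hj).subtypeEquiv fun p =>
          rCond_iff_of_parts_eq_cons rfl (Multiset.cons_erase p.2).symm
  · exact Nat.card_eq_zero.2 <| .inl ⟨fun p => hjn (p.1.le_of_mem_parts p.2.1)⟩

theorem card_mem_overlined_rCond (hk : 0 < k) (hkj : k ≤ j) :
    Nat.card {p : Overpartition n // j - k + 1 ∈ p.overlined ∧ j ∉ p.parts ∧ RCond k j m p} =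
      if j - k + 1 ≤ n ∧ 1 ≤ m then RCount k (j - k) (m - 1) (n - (j - k + 1)) else 0 := by
  split_ifs with h
  · obtain ⟨n, rfl⟩ := Nat.exists_eq_add_of_le' h.1
    obtain ⟨m, rfl⟩ := Nat.exists_eq_add_of_le' h.2
    rw [Nat.add_sub_cancel, Nat.add_sub_cancel, rCount_eq_card]
    exact Nat.card_congr <|
      (Equiv.subtypeSubtypeEquivSubtypeInter _ _).symm.trans <|
        ((Overpartition.removeOverlinedEquiv (Nat.succ_pos _)).subtypeEquiv fun p =>
          rCond_iff_of_overlined_eq_insert hk hkj (Overpartition.removeOverlinedEquiv _ p).2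
            (Finset.insert_erase p.2).symm rfl).trans <|
        Equiv.subtypeSubtypeEquivSubtype fun ⟨_, _, ho, _⟩ hb => by
          have := (ho _ hb).2
          omega
  · exact Nat.card_eq_zero.2 <| .inl ⟨fun ⟨p, hb, _, _, _, _, hm⟩ =>
      h ⟨p.le_of_mem_overlined hb, hm ▸ Finset.card_pos.2 ⟨_, hb⟩⟩⟩

theorem card_mem_overlined_rCond_of_lt (hjk : j < k) :
    Nat.card {p : Overpartition n // j - k + 1 ∈ p.overlined ∧ j ∉ p.parts ∧ RCond k j m p} = 0 :=
  Nat.card_eq_zero.2 <| .inl ⟨fun ⟨_, hb, _, _, _, ho, _⟩ => by have := (ho _ hb).2; omega⟩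

theorem rCount_eq_add (hk : 0 < k) (hj : 0 < j) :
    RCount k j m n = (if j ≤ n then RCount k j m (n - j) else 0) +
      Nat.card {p : Overpartition n // j - k + 1 ∈ p.overlined ∧ j ∉ p.parts ∧ RCond k j m p} +
      RCount k (j - 1) m n := by
  rw [rCount_eq_card, Nat.card_subtype_eq_card_and_add_card_and_not _ (j ∈ ·.parts),
    Nat.card_subtype_eq_card_and_add_card_and_not (fun p => j ∉ p.parts ∧ RCond k j m p)
      (j - k + 1 ∈ ·.overlined),
    card_mem_parts_rCond hj, add_assoc,
    Nat.card_congr (Equiv.subtypeEquivRight (rCond_iff_of_notMem hk))]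
  rfl

end RCond

section Rgf

variable {k j : ℕ}

theorem coeff_coeff_rgf (k j n m : ℕ) : (coeff n (Rgf k j)).coeff m = RCount k j m n := by
  simp only [Rgf, coeff_mk, Polynomial.finsetSum_coeff, Polynomial.coeff_C_mul_X_pow,
    Finset.sum_ite_eq, Finset.mem_range_succ_iff]
  split_ifs with h
  · rfl
  · rw [rCount_eq_zero_of_lt (not_le.1 h), Nat.cast_zero]

theorem rgf_zero (k : ℕ) : Rgf k 0 = 1 := by
  ext n m
  rw [coeff_coeff_rgf, rCount_zero, coeff_one]
  split_ifs <;> simp_all [Polynomial.coeff_one]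

theorem coeff_coeff_one_sub_X_pow_mul_rgf (hk : 0 < k) (hj : 0 < j) (n m : ℕ) :
    (coeff n ((1 - X ^ j) * Rgf k j)).coeff m = ((RCount k (j - 1) m n +
      Nat.card {p : Overpartition n // j - k + 1 ∈ p.overlined ∧ j ∉ p.parts ∧ RCond k j m p} :
        ℕ) : ℤ) := by
  rw [sub_mul, one_mul, map_sub, Polynomial.coeff_sub, coeff_X_pow_mul', coeff_coeff_rgf,
    rCount_eq_add hk hj]
  split_ifs <;> simp [coeff_coeff_rgf] <;> ring

theorem one_sub_X_pow_mul_rgf_of_lt (hj : 0 < j) (hjk : j < k) :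
    (1 - X ^ j) * Rgf k j = Rgf k (j - 1) := by
  ext n m
  rw [coeff_coeff_one_sub_X_pow_mul_rgf (by omega) hj, card_mem_overlined_rCond_of_lt hjk,
    coeff_coeff_rgf, add_zero]

theorem one_sub_X_pow_mul_rgf_of_le (hk : 0 < k) (hkj : k ≤ j) :
    (1 - X ^ j) * Rgf k j =
      Rgf k (j - 1) + C (R := Polynomial ℤ) Polynomial.X * X ^ (j - k + 1) * Rgf k (j - k) := by
  ext n m
  rw [coeff_coeff_one_sub_X_pow_mul_rgf hk (by omega), card_mem_overlined_rCond hk hkj, map_add,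
    Polynomial.coeff_add, coeff_coeff_rgf, mul_assoc, coeff_C_mul, coeff_X_pow_mul',
    ← pow_one Polynomial.X, Polynomial.coeff_X_pow_mul']
  split_ifs <;> simp_all [coeff_coeff_rgf]

theorem prod_one_sub_X_pow_mul_rgf_of_lt (hjk : j < k) :
    (∏ i ∈ Finset.range j, (1 - (X : PowerSeries (Polynomial ℤ)) ^ (i + 1))) * Rgf k j = 1 := by
  induction j with
  | zero => simp [rgf_zero]
  | succ j ih =>
    rw [Finset.prod_range_succ, mul_assoc, one_sub_X_pow_mul_rgf_of_lt j.succ_pos hjk,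
      Nat.succ_sub_one, ih (by omega)]

end Rgf

/-- The recursion and initial conditions for `R_j`: for `j ≥ k`,
`(1 − q^j) R_j = R_{j−1} + a q^{j−k+1} R_{j−k}`, and `R_j = 1/(q;q)_j` for `0 ≤ j < k`
(stated multiplied through by `(q;q)_j`). -/
theorem Rgf_recursion (k : ℕ) (hk : 2 ≤ k) :
    (∀ j : ℕ, k ≤ j →
      (1 - (PowerSeries.X : PowerSeries (Polynomial ℤ)) ^ j) * Rgf k j =
        Rgf k (j - 1) +
          PowerSeries.C (R := Polynomial ℤ) Polynomial.X * PowerSeries.X ^ (j - k + 1) *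
            Rgf k (j - k)) ∧
    (∀ j : ℕ, j < k →
      (∏ m ∈ Finset.range j, (1 - (PowerSeries.X : PowerSeries (Polynomial ℤ)) ^ (m + 1))) *
        Rgf k j = 1) :=
  ⟨fun _ hkj => one_sub_X_pow_mul_rgf_of_le (by omega) hkj,
    fun _ => prod_one_sub_X_pow_mul_rgf_of_lt⟩
end

section
/- Let (p_n) be a sequence of positive reals with ∑ p_n divergent and ∑ p_n z^n having radius of convergence 1, and let (a_n) be a real sequence with a_n / p_n → s. Then ∑ a_n z^n has radius of convergence at least 1 and lim_{r→1⁻} (∑_{n≥0} a_n r^n)/(∑_{n≥0} p_n r^n) = s. -/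
/-!
Write `P r = ∑ pₙ rⁿ`. Each partial sum `∑_{n<N} pₙ` is the limit as `r → 1⁻` of
`∑_{n<N} pₙ rⁿ ≤ P r`, so the divergence of `∑ pₙ` forces `P r → ∞`. Now `bₙ = aₙ - s pₙ` is
`o(pₙ)`: beyond some `N`, `|bₙ| ≤ ε pₙ`, so `|∑ bₙ rⁿ| ≤ ∑_{n<N} |bₙ| + ε P r` for `0 ≤ r < 1`,
and the fixed first term is eventually negligible against `P r`. Hence
`∑ aₙ rⁿ = s P r + o(P r)`.
-/

open Filter Finset Topology Asymptotics

variable {p b : ℕ → ℝ}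

lemma summable_mul_pow_of_isBigO (hrad : ∀ r : ℝ, |r| < 1 → Summable (fun n => p n * r ^ n))
    (hb : b =O[atTop] p) {r : ℝ} (hr : |r| < 1) : Summable (fun n => b n * r ^ n) :=
  summable_of_isBigO_nat (hrad r hr) (hb.mul (isBigO_refl _ _))

lemma tendsto_tsum_mul_pow_nhdsLT_one_atTop (hp : ∀ n, 0 ≤ p n) (hdiv : ¬ Summable p)
    (hrad : ∀ r : ℝ, |r| < 1 → Summable (fun n => p n * r ^ n)) :
    Tendsto (fun r : ℝ => ∑' n, p n * r ^ n) (𝓝[<] 1) atTop := by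
  refine tendsto_atTop.2 fun M => ?_
  have hpartial := (not_summable_iff_tendsto_nat_atTop_of_nonneg hp).1 hdiv
  obtain ⟨N, hN⟩ := (hpartial.eventually_gt_atTop M).exists
  have hpoly : Tendsto (fun r : ℝ => ∑ i ∈ range N, p i * r ^ i) (𝓝[<] 1)
      (𝓝 (∑ i ∈ range N, p i)) := by
    have hcont : Continuous (fun r : ℝ => ∑ i ∈ range N, p i * r ^ i) := by fun_prop
    simpa using (hcont.tendsto 1).mono_left nhdsWithin_le_nhds
  filter_upwards [hpoly.eventually (lt_mem_nhds hN), Ioo_mem_nhdsLT zero_lt_one]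
    with r hMr ⟨hr0, hr1⟩
  have hsum := hrad r (by rwa [abs_of_pos hr0])
  exact (hMr.trans_le <| hsum.sum_le_tsum (range N) fun i _ =>
    mul_nonneg (hp i) (pow_nonneg hr0.le i)).le

lemma abs_tsum_mul_pow_le (hp : ∀ n, 0 ≤ p n) {r : ℝ} (hr0 : 0 ≤ r) (hr1 : r ≤ 1)
    (hps : Summable (fun n => p n * r ^ n)) (hbs : Summable (fun n => b n * r ^ n))
    {c : ℝ} (hc : 0 ≤ c) {N : ℕ} (hN : ∀ n ≥ N, |b n| ≤ c * p n) :
    |∑' n, b n * r ^ n| ≤ ∑ n ∈ range N, |b n| + c * ∑' n, p n * r ^ n := by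
  have hhead : |∑ n ∈ range N, b n * r ^ n| ≤ ∑ n ∈ range N, |b n| := by
    refine (abs_sum_le_sum_abs _ _).trans (sum_le_sum fun n _ => ?_)
    rw [abs_mul, abs_of_nonneg (pow_nonneg hr0 n)]
    exact mul_le_of_le_one_right (abs_nonneg _) (pow_le_one₀ hr0 hr1)
  have htail : |∑' n, b (n + N) * r ^ (n + N)| ≤ c * ∑' n, p n * r ^ n := by
    have hshift : Summable (fun n => p (n + N) * r ^ (n + N)) :=
      hps.comp_injective (add_left_injective N)
    calc |∑' n, b (n + N) * r ^ (n + N)| ≤ c * ∑' n, p (n + N) * r ^ (n + N) := by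
          rw [← Real.norm_eq_abs]
          refine tsum_of_norm_bounded (hshift.hasSum.mul_left c) fun n => ?_
          rw [Real.norm_eq_abs, abs_mul, abs_of_nonneg (pow_nonneg hr0 _), ← mul_assoc]
          exact mul_le_mul_of_nonneg_right (hN _ (Nat.le_add_left N n)) (pow_nonneg hr0 _)
      _ ≤ c * ∑' n, p n * r ^ n := by
          refine mul_le_mul_of_nonneg_left ?_ hc
          exact tsum_comp_le_tsum_of_inj hps (fun n => mul_nonneg (hp n) (pow_nonneg hr0 n))
            (add_left_injective N)
  rw [← hbs.sum_add_tsum_nat_add N]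
  exact (abs_add_le _ _).trans (add_le_add hhead htail)

lemma isLittleO_tsum_mul_pow (hp : ∀ n, 0 ≤ p n)
    (hrad : ∀ r : ℝ, |r| < 1 → Summable (fun n => p n * r ^ n))
    (hP : Tendsto (fun r : ℝ => ∑' n, p n * r ^ n) (𝓝[<] 1) atTop) (hb : b =o[atTop] p) :
    (fun r : ℝ => ∑' n, b n * r ^ n) =o[𝓝[<] 1] fun r => ∑' n, p n * r ^ n := by
  refine isLittleO_iff.2 fun c hc => ?_
  obtain ⟨N, hN⟩ := eventually_atTop.1 (hb.def (half_pos hc))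
  have hhead : ∀ᶠ r in 𝓝[<] (1 : ℝ), ∑ n ∈ range N, |b n| ≤ c / 2 * ∑' n, p n * r ^ n := by
    filter_upwards [hP.eventually_ge_atTop ((∑ n ∈ range N, |b n|) / (c / 2))] with r hr
    rwa [div_le_iff₀' (half_pos hc)] at hr
  filter_upwards [hhead, Ioo_mem_nhdsLT zero_lt_one] with r hr ⟨hr0, hr1⟩
  have hr' : |r| < 1 := by rwa [abs_of_pos hr0]
  have hPnonneg : 0 ≤ ∑' n, p n * r ^ n :=
    tsum_nonneg fun n => mul_nonneg (hp n) (pow_nonneg hr0.le n)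
  have hbound := abs_tsum_mul_pow_le hp hr0.le hr1.le (hrad r hr')
    (summable_mul_pow_of_isBigO hrad hb.isBigO hr') (half_pos hc).le
    fun n hn => by simpa only [Real.norm_eq_abs, abs_of_nonneg (hp n)] using hN n hn
  rw [Real.norm_eq_abs, Real.norm_eq_abs, abs_of_nonneg hPnonneg]
  linarith

/-- Appell's comparison theorem (Dienes, "The Taylor Series", p. 101).
If `(pₙ)` is a sequence of positive reals with `∑ pₙ` divergent and
`∑ pₙ zⁿ` of radius of convergence `1`, and `aₙ / pₙ → s`, then `∑ aₙ zⁿ`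
has radius of convergence at least `1` and
`(∑ aₙ rⁿ)/(∑ pₙ rⁿ) → s` as `r → 1⁻`. -/
theorem appell_comparison (p a : ℕ → ℝ) (s : ℝ)
    (hpos : ∀ n, 0 < p n)
    (hdiv : ¬ Summable p)
    (hrad : ∀ r : ℝ, |r| < 1 → Summable (fun n => p n * r ^ n))
    (hlim : Filter.Tendsto (fun n => a n / p n) Filter.atTop (nhds s)) :
    (∀ r : ℝ, |r| < 1 → Summable (fun n => a n * r ^ n)) ∧
    Filter.Tendsto (fun r : ℝ => (∑' n, a n * r ^ n) / (∑' n, p n * r ^ n))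
      (nhdsWithin 1 (Set.Iio 1)) (nhds s) := by
  have hp : ∀ n, 0 ≤ p n := fun n => (hpos n).le
  have hp0 : ∀ f : ℕ → ℝ, ∀ᶠ n in atTop, p n = 0 → f n = 0 := fun _ =>
    Eventually.of_forall fun n h => absurd h (hpos n).ne'
  have ha : ∀ r : ℝ, |r| < 1 → Summable (fun n => a n * r ^ n) := fun _ =>
    summable_mul_pow_of_isBigO hrad (isBigO_of_div_tendsto_nhds (hp0 a) s hlim)
  refine ⟨ha, ?_⟩
  have hP := tendsto_tsum_mul_pow_nhdsLT_one_atTop hp hdiv hrad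
  have hsmall : (fun n => a n - s * p n) =o[atTop] p := by
    refine (isLittleO_iff_tendsto' (hp0 _)).2 ?_
    have hlim' := hlim.sub_const s
    rw [sub_self] at hlim'
    refine hlim'.congr fun n => ?_
    field_simp [(hpos n).ne']
  have hrem := (isLittleO_tsum_mul_pow hp hrad hP hsmall).tendsto_div_nhds_zero.const_add s
  rw [add_zero] at hrem
  refine hrem.congr' ?_
  filter_upwards [hP.eventually_gt_atTop 0, Ioo_mem_nhdsLT zero_lt_one] with r hPr ⟨hr0, hr1⟩
  have hr : |r| < 1 := by rwa [abs_of_pos hr0]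
  simp only [sub_mul, mul_assoc]
  rw [(ha r hr).tsum_sub ((hrad r hr).mul_left s), tsum_mul_left]
  field_simp
  ring
end
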